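/- For each B_min > 0 there exists B_max > 0, depending only on B_min, such that the following holds. Let E ⊂ ℝ² be a finite set, f : E → [0, ∞), M > 0, and let k′ ≥ 2 be an integer. Suppose that for every subset S ⊂ E with #S ≤ k′ there exists F^S ∈ C²₊(ℝ²) with ‖F^S‖_{C²(ℝ²)} ≤ M and F^S = f on S. Let Q be a square with side length δ_Q. Then at least one of the following holds: (A) f(x) ≤ B_max·M·δ_Q² for all x ∈ E ∩ Q*; or (B) f(x) ≥ B_min·M·δ_Q² for all x ∈ E ∩ Q*. -/

import Mathlib

/-!
A nonnegative function `g` on `[-1, 1]` with `|g''| ≤ K` satisfies `g 1 ≤ 2 g 0 + 2 K`: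
the first-order Taylor estimates at `±1` give `g (±1) ≤ g 0 ± g' 0 + K`, and adding them the
unknown slope `g' 0` cancels while `g (-1) ≥ 0`. Along segments in `ℝ²`, a `C²` bound `M` on
`F ≥ 0` bounds its second derivative by `2 M ‖v‖²`, so `F y ≤ 2 F x₀ + 4 M ‖y - x₀‖²`. Two points
of `Q*` are at distance at most `2√2 δ_Q`, so if some `x₀ ∈ E ∩ Q*` has `f x₀ < B_min M δ_Q²`,
then the two-point interpolant on `{x₀, y}` gives `f y ≤ (2 B_min + 32) M δ_Q²` on all of
`E ∩ Q*`.
-/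

noncomputable section

/-- The plane `ℝ²` with the Euclidean metric. -/
abbrev V2 : Type := EuclideanSpace ℝ (Fin 2)

/-- Partial derivative of `F : ℝ² → ℝ` in the `i`-th coordinate direction. -/
noncomputable def pd (i : Fin 2) (F : V2 → ℝ) : V2 → ℝ :=
  fun x => fderiv ℝ F x (EuclideanSpace.single i 1)

/-- `Σ_{|α| ≤ 2} |∂^α F(x)|²`, the sum over all multi-indices `α` of order at most `2`. -/
noncomputable def c2SqAt (F : V2 → ℝ) (x : V2) : ℝ :=
  (F x) ^ 2 + (pd 0 F x) ^ 2 + (pd 1 F x) ^ 2 +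
    (pd 0 (pd 0 F) x) ^ 2 + (pd 0 (pd 1 F) x) ^ 2 + (pd 1 (pd 1 F) x) ^ 2

/-- `‖F‖_{C²(ℝ²)} := sup_x (Σ_{|α|≤2} |∂^α F(x)|²)^{1/2} ≤ M`. -/
def C2NormLE (F : V2 → ℝ) (M : ℝ) : Prop :=
  ∀ x : V2, Real.sqrt (c2SqAt F x) ≤ M

/-- The 1-jet of `F` at `x`: `𝒥_x F (y) = F(x) + ∇F(x) · (y − x)`. -/
noncomputable def jet (x : V2) (F : V2 → ℝ) : V2 → ℝ :=
  fun y => F x + fderiv ℝ F x (y - x)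

/-- A (half-open) axis-parallel square `[s, s+len) × [t, t+len)` in `ℝ²`. -/
structure Sq where
  s : ℝ
  t : ℝ
  len : ℝ

/-- The square `Q` itself, as a subset of `ℝ²`. -/
def Sq.carrier (Q : Sq) : Set V2 :=
  {p : V2 | Q.s ≤ p 0 ∧ p 0 < Q.s + Q.len ∧ Q.t ≤ p 1 ∧ p 1 < Q.t + Q.len}

/-- `Q* := 2Q`, the concentric double of `Q`. -/
def Sq.double (Q : Sq) : Set V2 :=
  {p : V2 | Q.s - Q.len / 2 ≤ p 0 ∧ p 0 < Q.s + 3 * Q.len / 2 ∧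
            Q.t - Q.len / 2 ≤ p 1 ∧ p 1 < Q.t + 3 * Q.len / 2}

open Set

lemma abs_sub_le_of_abs_deriv_le_on_Icc {h h' : ℝ → ℝ} {K t : ℝ}
    (hd : ∀ s, HasDerivAt h (h' s) s) (hb : ∀ s ∈ Icc (-1 : ℝ) 1, |h' s| ≤ K)
    (ht : t ∈ Icc (-1 : ℝ) 1) : |h t - h 0| ≤ K := by
  have hK : 0 ≤ K := (abs_nonneg _).trans (hb 0 (by norm_num))
  calc |h t - h 0| ≤ K * |t - 0| :=
        (convex_Icc (-1 : ℝ) 1).norm_image_sub_le_of_norm_hasDerivWithin_le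
          (fun s _ => (hd s).hasDerivWithinAt) hb (by norm_num) ht
    _ ≤ K * 1 := by gcongr; rw [sub_zero, abs_le]; exact ht
    _ = K := mul_one K

lemma le_two_mul_add_of_abs_deriv2_le {g g' g'' : ℝ → ℝ} {K : ℝ}
    (hg : ∀ t, HasDerivAt g (g' t) t) (hg' : ∀ t, HasDerivAt g' (g'' t) t)
    (hK : ∀ t ∈ Icc (-1 : ℝ) 1, |g'' t| ≤ K) (hnonneg : 0 ≤ g (-1)) :
    g 1 ≤ 2 * g 0 + 2 * K := by
  have hslope : ∀ t ∈ Icc (-1 : ℝ) 1, |g' t - g' 0| ≤ K := fun t ht =>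
    abs_sub_le_of_abs_deriv_le_on_Icc hg' hK ht
  have hφ : ∀ t, HasDerivAt (fun s => g s - s * g' 0) (g' t - g' 0) t := fun t => by
    have := (hg t).sub ((hasDerivAt_id' t).mul_const (g' 0))
    rwa [one_mul] at this
  have hright := abs_sub_le_of_abs_deriv_le_on_Icc hφ hslope (t := 1) (by norm_num)
  have hleft := abs_sub_le_of_abs_deriv_le_on_Icc hφ hslope (t := -1) (by norm_num)
  simp only [zero_mul, sub_zero, one_mul, neg_mul, sub_neg_eq_add] at hright hleft
  linarith [(abs_le.mp hright).2, (abs_le.mp hleft).2]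

lemma le_two_mul_add_of_abs_fderiv_fderiv_le {E : Type*} [NormedAddCommGroup E]
    [NormedSpace ℝ E] {F : E → ℝ} {K : ℝ} (hF : ContDiff ℝ 2 F) (hnonneg : ∀ y, 0 ≤ F y)
    (p q : E) (hK : ∀ y, |fderiv ℝ (fderiv ℝ F) y (q - p) (q - p)| ≤ K) :
    F q ≤ 2 * F p + 2 * K := by
  set line : ℝ → E := fun t => p + t • (q - p)
  have hline : ∀ t, HasDerivAt line (q - p) t := fun t => by
    simpa [line] using ((hasDerivAt_id t).smul_const (q - p)).const_add p
  have hdF : Differentiable ℝ (fderiv ℝ F) :=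
    (hF.fderiv_right (by norm_num)).differentiable one_ne_zero
  have hg : ∀ t, HasDerivAt (fun s => F (line s)) (fderiv ℝ F (line t) (q - p)) t := fun t =>
    ((hF.differentiable two_ne_zero) (line t)).hasFDerivAt.comp_hasDerivAt t (hline t)
  have hg' : ∀ t, HasDerivAt (fun s => fderiv ℝ F (line s) (q - p))
      (fderiv ℝ (fderiv ℝ F) (line t) (q - p) (q - p)) t := fun t =>
    (ContinuousLinearMap.apply ℝ ℝ (q - p)).hasFDerivAt.comp_hasDerivAt t
      ((hdF (line t)).hasFDerivAt.comp_hasDerivAt t (hline t))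
  simpa [line] using le_two_mul_add_of_abs_deriv2_le hg hg' (fun t _ => hK (line t))
    (hnonneg (line (-1)))

lemma abs_le_of_sq_le_c2SqAt {F : V2 → ℝ} {M a : ℝ} (h : C2NormLE F M) (x : V2)
    (ha : a ^ 2 ≤ c2SqAt F x) : |a| ≤ M :=
  calc |a| = Real.sqrt (a ^ 2) := (Real.sqrt_sq_eq_abs a).symm
    _ ≤ Real.sqrt (c2SqAt F x) := Real.sqrt_le_sqrt ha
    _ ≤ M := h x

lemma pd_pd_eq_fderiv_fderiv {F : V2 → ℝ} (hF : ContDiff ℝ 2 F) (i j : Fin 2) (x : V2) :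
    pd i (pd j F) x =
      fderiv ℝ (fderiv ℝ F) x (EuclideanSpace.single i 1) (EuclideanSpace.single j 1) := by
  have hdF : HasFDerivAt (fderiv ℝ F) (fderiv ℝ (fderiv ℝ F) x) x :=
    ((hF.fderiv_right (by norm_num)).differentiable one_ne_zero x).hasFDerivAt
  have hpd : HasFDerivAt (pd j F)
      ((ContinuousLinearMap.apply ℝ ℝ (EuclideanSpace.single j 1)).comp
        (fderiv ℝ (fderiv ℝ F) x)) x :=
    (ContinuousLinearMap.apply ℝ ℝ (EuclideanSpace.single (𝕜 := ℝ) j 1)).hasFDerivAt.comp x hdF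
  simp [pd, hpd.fderiv]

lemma abs_apply_self_le_of_abs_apply_single_le {B : V2 →L[ℝ] V2 →L[ℝ] ℝ} {M : ℝ}
    (hB : ∀ i j, |B (EuclideanSpace.single i 1) (EuclideanSpace.single j 1)| ≤ M) (v : V2) :
    |B v v| ≤ 2 * M * ‖v‖ ^ 2 := by
  have hv : v = v 0 • EuclideanSpace.single 0 1 + v 1 • EuclideanSpace.single 1 1 := by
    ext i; fin_cases i <;> simp
  have hexpand : B v v = v 0 * v 0 * B (EuclideanSpace.single 0 1) (EuclideanSpace.single 0 1)
      + v 0 * v 1 * B (EuclideanSpace.single 0 1) (EuclideanSpace.single 1 1)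
      + v 1 * v 0 * B (EuclideanSpace.single 1 1) (EuclideanSpace.single 0 1)
      + v 1 * v 1 * B (EuclideanSpace.single 1 1) (EuclideanSpace.single 1 1) := by
    conv_lhs => rw [hv]
    simp only [map_add, map_smul, add_apply, smul_apply, smul_eq_mul]
    ring
  have hnorm : ‖v‖ ^ 2 = v 0 ^ 2 + v 1 ^ 2 := by
    simp [EuclideanSpace.real_norm_sq_eq, Fin.sum_univ_two]
  have h00 := abs_le.mp (hB 0 0)
  have h01 := abs_le.mp (hB 0 1)
  have h10 := abs_le.mp (hB 1 0)
  have h11 := abs_le.mp (hB 1 1)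
  rw [hexpand, hnorm, abs_le]
  constructor <;> nlinarith [sq_nonneg (v 0 + v 1), sq_nonneg (v 0 - v 1)]

lemma abs_fderiv_fderiv_apply_self_le {F : V2 → ℝ} {M : ℝ} (hF : ContDiff ℝ 2 F)
    (hM : C2NormLE F M) (x v : V2) : |fderiv ℝ (fderiv ℝ F) x v v| ≤ 2 * M * ‖v‖ ^ 2 := by
  have hc2 : ∀ i j : Fin 2, i ≤ j → |pd i (pd j F) x| ≤ M := by
    intro i j hij
    refine abs_le_of_sq_le_c2SqAt hM x ?_
    unfold c2SqAt
    fin_cases i <;> fin_cases j <;> simp at hij ⊢ <;> nlinarith [sq_nonneg (F x),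
      sq_nonneg (pd 0 F x), sq_nonneg (pd 1 F x), sq_nonneg (pd 0 (pd 0 F) x),
      sq_nonneg (pd 0 (pd 1 F) x), sq_nonneg (pd 1 (pd 1 F) x)]
  refine abs_apply_self_le_of_abs_apply_single_le (fun i j => ?_) v
  rcases le_total i j with hij | hji
  · rw [← pd_pd_eq_fderiv_fderiv hF]; exact hc2 i j hij
  · rw [(hF.contDiffAt.isSymmSndFDerivAt (by simp)) _ _, ← pd_pd_eq_fderiv_fderiv hF]
    exact hc2 j i hji

lemma le_two_mul_add_of_C2NormLE {F : V2 → ℝ} {M : ℝ} (hF : ContDiff ℝ 2 F)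
    (hnonneg : ∀ y, 0 ≤ F y) (hM : C2NormLE F M) (p q : V2) :
    F q ≤ 2 * F p + 4 * M * ‖q - p‖ ^ 2 := by
  have := le_two_mul_add_of_abs_fderiv_fderiv_le hF hnonneg p q
    (fun y => abs_fderiv_fderiv_apply_self_le hF hM y (q - p))
  linarith

lemma Sq.norm_sub_sq_le_of_mem_double {Q : Sq} {x y : V2} (hx : x ∈ Q.double)
    (hy : y ∈ Q.double) : ‖x - y‖ ^ 2 ≤ 8 * Q.len ^ 2 := by
  obtain ⟨hx0, hx0', hx1, hx1'⟩ := hx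
  obtain ⟨hy0, hy0', hy1, hy1'⟩ := hy
  simp only [EuclideanSpace.real_norm_sq_eq, Fin.sum_univ_two, PiLp.sub_apply]
  nlinarith

/-- **Lemma 7.5 (dichotomy: the local data is uniformly big or uniformly small).**
For each `B_min > 0` there is `B_max > 0`, depending only on `B_min`, such that if every
at-most-`k′`-point subset of `E` (`k′ ≥ 2`) admits a nonnegative `C²` interpolant of norm
at most `M`, then for every square `Q`, either `f ≤ B_max·M·δ_Q²` on all of `E ∩ Q*`, or
`f ≥ B_min·M·δ_Q²` on all of `E ∩ Q*`. -/
theorem local_data_dichotomy :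
    ∀ Bmin : ℝ, 0 < Bmin →
      ∃ Bmax : ℝ, 0 < Bmax ∧
        ∀ (E : Finset V2) (f : V2 → ℝ) (M : ℝ) (k' : ℕ) (Q : Sq),
          (∀ y ∈ E, 0 ≤ f y) → 0 < M → 2 ≤ k' → 0 < Q.len →
          (∀ S : Finset V2, S ⊆ E → S.card ≤ k' →
            ∃ FS : V2 → ℝ, ContDiff ℝ 2 FS ∧ (∀ y : V2, 0 ≤ FS y) ∧
              C2NormLE FS M ∧ (∀ x ∈ S, FS x = f x)) →
          (∀ x ∈ E, (x : V2) ∈ Q.double → f x ≤ Bmax * M * Q.len ^ 2) ∨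
          (∀ x ∈ E, (x : V2) ∈ Q.double → Bmin * M * Q.len ^ 2 ≤ f x) := by
  classical
  intro Bmin hBmin
  refine ⟨2 * Bmin + 32, by linarith, fun E f M k' Q _ hM hk _ hinterp => ?_⟩
  by_cases hbig : ∀ x ∈ E, x ∈ Q.double → Bmin * M * Q.len ^ 2 ≤ f x
  · exact Or.inr hbig
  push Not at hbig
  obtain ⟨x₀, hx₀E, hx₀Q, hx₀small⟩ := hbig
  refine Or.inl fun x hxE hxQ => ?_
  obtain ⟨F, hF, hFnonneg, hFM, hFf⟩ := hinterp {x₀, x}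
    (Finset.insert_subset_iff.mpr ⟨hx₀E, Finset.singleton_subset_iff.mpr hxE⟩)
    (Finset.card_le_two.trans hk)
  have hgrowth := le_two_mul_add_of_C2NormLE hF hFnonneg hFM x₀ x
  rw [hFf x (by simp), hFf x₀ (by simp)] at hgrowth
  have hdist := Sq.norm_sub_sq_le_of_mem_double hxQ hx₀Q
  nlinarith
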